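/- arXiv:0909.4717 — 2 statements merged into one kernel-verified Lean document; each statement's English description precedes it below -/
import Mathlib

section
/- Let G be a simple graph on [n], and S, T subsets of [n]. Let G_1,...,G_s be the connected components of the induced subgraph on [n]∖S and H_1,...,H_t those on [n]∖T. Then P_T(G) ⊆ P_S(G) if and only if T ⊆ S and for each i = 1,...,t there exists j with V(H_i)∖S ⊆ V(G_j). -/
open MvPolynomial

/-- The binomial `f_{ab} = x_a y_b - x_b y_a` in `K[x_1,…,x_n,y_1,…,y_n]`. -/
noncomputable def edgeBinomial (K : Type*) [Field K] {n : ℕ} (a b : Fin n) :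
    MvPolynomial (Fin n ⊕ Fin n) K :=
  X (Sum.inl a) * X (Sum.inr b) - X (Sum.inl b) * X (Sum.inr a)

/-- The prime ideal `P_U(G)`. -/
noncomputable def componentPrime (K : Type*) [Field K] {n : ℕ}
    (G : SimpleGraph (Fin n)) (U : Set (Fin n)) :
    Ideal (MvPolynomial (Fin n ⊕ Fin n) K) :=
  Ideal.span ({p | ∃ i ∈ U, p = X (Sum.inl i) ∨ p = X (Sum.inr i)} ∪
    {p | ∃ a b : (Uᶜ : Set (Fin n)), (G.induce Uᶜ).Reachable a b ∧
      p = edgeBinomial K a.1 b.1})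

/-- `P_T(G) ⊆ P_S(G)` if and only if `T ⊆ S` and each connected component `H` of the
induced subgraph on `[n] ∖ T` satisfies `V(H) ∖ S ⊆ V(G_j)` for some connected
component `G_j` of the induced subgraph on `[n] ∖ S` (equivalently: any two vertices of
`H` outside `S` are connected in the restriction to `[n] ∖ S`). -/
theorem componentPrime_le_iff (K : Type*) [Field K] {n : ℕ}
    (G : SimpleGraph (Fin n)) (S T : Set (Fin n)) :
    componentPrime K G T ≤ componentPrime K G S ↔
      T ⊆ S ∧
        ∀ (a b : Fin n) (ha : a ∈ Tᶜ) (hb : b ∈ Tᶜ),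
          (G.induce Tᶜ).Reachable ⟨a, ha⟩ ⟨b, hb⟩ →
            ∀ (ha' : a ∈ Sᶜ) (hb' : b ∈ Sᶜ),
              (G.induce Sᶜ).Reachable ⟨a, ha'⟩ ⟨b, hb'⟩ := by
  classical
  constructor
  · intro h
    constructor
    · intro i hi
      by_contra hiS
      set f : Fin n ⊕ Fin n → K := Sum.elim (fun j => if j ∈ S then 0 else 1)
        (fun j => if j ∈ S then 0 else 1) with hf
      have hker : componentPrime K G S ≤ RingHom.ker (eval f) := by
        rw [componentPrime, Ideal.span_le]
        rintro p hp
        rcases hp with ⟨j, hj, (rfl | rfl)⟩ | ⟨c, d, hcd, rfl⟩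
        · simp [RingHom.mem_ker, f, hj]
        · simp [RingHom.mem_ker, f, hj]
        · have hc : c.1 ∉ S := c.2
          have hd : d.1 ∉ S := d.2
          simp [RingHom.mem_ker, edgeBinomial, f, hc, hd]
      have hx : X (Sum.inl i) ∈ componentPrime K G T :=
        Ideal.subset_span (Or.inl ⟨i, hi, Or.inl rfl⟩)
      have := hker (h hx)
      rw [RingHom.mem_ker] at this
      simp [f, hiS] at this
    · intro a b ha hb hreach ha' hb'
      by_contra hnr
      set f : Fin n ⊕ Fin n → K := Sum.elim (fun j => if j ∈ S then 0 else 1)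
        (fun j => if hj : j ∈ Sᶜ then
          (if (G.induce Sᶜ).Reachable ⟨a, ha'⟩ ⟨j, hj⟩ then 1 else 0) else 0) with hf
      have hker : componentPrime K G S ≤ RingHom.ker (eval f) := by
        rw [componentPrime, Ideal.span_le]
        rintro p hp
        rcases hp with ⟨j, hj, (rfl | rfl)⟩ | ⟨c, d, hcd, rfl⟩
        · simp [RingHom.mem_ker, f, hj]
        · have hj' : j ∉ Sᶜ := fun hc => hc hj
          simp only [SetLike.mem_coe, RingHom.mem_ker, eval_X, f, Sum.elim_inr]
          rw [dif_neg hj']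
        · have hc : c.1 ∉ S := c.2
          have hd : d.1 ∉ S := d.2
          have hc2 : c.1 ∈ Sᶜ := c.2
          have hd2 : d.1 ∈ Sᶜ := d.2
          rw [SetLike.mem_coe, RingHom.mem_ker]
          have hcoe : (⟨c.1, hc2⟩ : (Sᶜ : Set (Fin n))) = c := rfl
          have hdoe : (⟨d.1, hd2⟩ : (Sᶜ : Set (Fin n))) = d := rfl
          have hiff : (G.induce Sᶜ).Reachable ⟨a, ha'⟩ ⟨c.1, hc2⟩ ↔
              (G.induce Sᶜ).Reachable ⟨a, ha'⟩ ⟨d.1, hd2⟩ := by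
            rw [hcoe, hdoe]
            exact ⟨fun h' => h'.trans hcd, fun h' => h'.trans hcd.symm⟩
          simp only [edgeBinomial, map_sub, map_mul, eval_X, f, Sum.elim_inl,
            Sum.elim_inr, if_neg hc, if_neg hd, dif_pos hc2, dif_pos hd2]
          by_cases hac : (G.induce Sᶜ).Reachable ⟨a, ha'⟩ ⟨c.1, hc2⟩
          · rw [if_pos hac, if_pos (hiff.mp hac)]; ring
          · rw [if_neg hac, if_neg (fun h' => hac (hiff.mpr h'))]; ring
      have hx : edgeBinomial K a b ∈ componentPrime K G T :=
        Ideal.subset_span (Or.inr ⟨⟨a, ha⟩, ⟨b, hb⟩, hreach, rfl⟩)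
      have := hker (h hx)
      rw [RingHom.mem_ker] at this
      have haS : a ∉ S := ha'
      have hbS : b ∉ S := hb'
      simp only [edgeBinomial, map_sub, map_mul, eval_X, f, Sum.elim_inl,
        Sum.elim_inr, if_neg haS, if_neg hbS, dif_pos ha', dif_pos hb',
        if_pos (SimpleGraph.Reachable.refl (⟨a, ha'⟩ : (Sᶜ : Set (Fin n)))), if_neg hnr] at this
      simp at this
  · rintro ⟨hTS, hcond⟩
    rw [componentPrime, Ideal.span_le]
    rintro p hp
    rcases hp with ⟨i, hi, (rfl | rfl)⟩ | ⟨c, d, hcd, rfl⟩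
    · exact Ideal.subset_span (Or.inl ⟨i, hTS hi, Or.inl rfl⟩)
    · exact Ideal.subset_span (Or.inl ⟨i, hTS hi, Or.inr rfl⟩)
    · by_cases hcS : c.1 ∈ S
      · have hx : X (Sum.inl c.1) ∈ componentPrime K G S :=
          Ideal.subset_span (Or.inl ⟨c.1, hcS, Or.inl rfl⟩)
        have hy : X (Sum.inr c.1) ∈ componentPrime K G S :=
          Ideal.subset_span (Or.inl ⟨c.1, hcS, Or.inr rfl⟩)
        exact Ideal.sub_mem _ (Ideal.mul_mem_right _ _ hx) (Ideal.mul_mem_left _ _ hy)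
      · by_cases hdS : d.1 ∈ S
        · have hx : X (Sum.inl d.1) ∈ componentPrime K G S :=
            Ideal.subset_span (Or.inl ⟨d.1, hdS, Or.inl rfl⟩)
          have hy : X (Sum.inr d.1) ∈ componentPrime K G S :=
            Ideal.subset_span (Or.inl ⟨d.1, hdS, Or.inr rfl⟩)
          exact Ideal.sub_mem _ (Ideal.mul_mem_left _ _ hy) (Ideal.mul_mem_right _ _ hx)
        · have hr := hcond c.1 d.1 c.2 d.2 hcd hcS hdS
          exact Ideal.subset_span (Or.inr ⟨⟨c.1, hcS⟩, ⟨d.1, hdS⟩, hr, rfl⟩)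
end

section
/- Let G be a connected simple graph on [n] and S ⊆ [n]. Then P_S(G) is a minimal prime of J_G if and only if S = ∅, or S ≠ ∅ and for each i ∈ S one has c(S∖{i}) < c(S), i.e., each i ∈ S is a cut vertex of the induced subgraph of G on ([n]∖S) ∪ {i}. -/
/-!
`P_U(G)` is the kernel of the map `x_i ↦ s_C t_i`, `y_i ↦ u_C t_i` (`i` in the component `C` of
`G[Uᶜ]`), `x_i, y_i ↦ 0` (`i ∈ U`): modulo `P_U(G)` every monomial reduces to a standard one,
containing no `x_a y_b` with `a < b` in a common component, and distinct standard monomials have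
distinct images. So each `P_U(G)` is a prime over `J_G`. Conversely every prime `Q ⊇ J_G`
contains `P_T(G)` for `T = {i | x_i, y_i ∈ Q}`, and `P_U(G) ⊆ P_S(G)` exactly when `U ⊆ S` and
vertices outside `S` joined in `G[Uᶜ]` are already joined in `G[Sᶜ]`. Hence `P_S(G)` is minimal
iff putting any `i ∈ S` back into `G[Sᶜ]` merges two components, i.e. `c(S ∖ {i}) < c(S)`.
-/

open MvPolynomial

/-- The binomial edge ideal `J_G` of a simple graph `G` on `[n]`. -/
noncomputable def binomialEdgeIdeal (K : Type*) [Field K] {n : ℕ}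
    (G : SimpleGraph (Fin n)) : Ideal (MvPolynomial (Fin n ⊕ Fin n) K) :=
  Ideal.span {p | ∃ i j : Fin n, G.Adj i j ∧ i < j ∧ p = edgeBinomial K i j}

/-- `c(U)`: the number of connected components of the induced subgraph of `G`
on `[n] ∖ U`. -/
noncomputable def numComponents {n : ℕ} (G : SimpleGraph (Fin n))
    (U : Set (Fin n)) : ℕ :=
  Nat.card ((G.induce Uᶜ).ConnectedComponent)

open Function SimpleGraph

namespace SimpleGraph

variable {V : Type*} (G : SimpleGraph V) {s t : Set V}

lemma injective_map_induceHomOfLE_iff (h : s ⊆ t) :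
    Injective (ConnectedComponent.map (G.induceHomOfLE h).toHom) ↔
      ∀ a b : s, (G.induce t).Reachable (Set.inclusion h a) (Set.inclusion h b) →
        (G.induce s).Reachable a b := by
  refine ⟨fun hinj a b hab => ConnectedComponent.exact (hinj ?_), fun H => ?_⟩
  · exact ConnectedComponent.sound hab
  · exact ConnectedComponent.ind₂ fun a b hab =>
      ConnectedComponent.sound (H a b (ConnectedComponent.exact hab))

lemma reachable_of_forall_mem_support (h : s ⊆ t) {a b : s}
    (w : (G.induce t).Walk (Set.inclusion h a) (Set.inclusion h b))
    (hw : ∀ u ∈ w.support, u.1 ∈ s) : (G.induce s).Reachable a b := by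
  let w' := w.map (Embedding.induce t).toHom
  have hw' : ∀ x ∈ w'.support, x ∈ s := by
    simp only [w', Walk.support_map, List.mem_map]
    rintro _ ⟨u, hu, rfl⟩
    exact hw u hu
  exact ⟨w'.induce s hw'⟩

lemma surjective_map_induceHomOfLE (h : s ⊆ t) {i : V} (hi : t ⊆ insert i s)
    (hni : ¬ Injective (ConnectedComponent.map (G.induceHomOfLE h).toHom)) :
    Surjective (ConnectedComponent.map (G.induceHomOfLE h).toHom) := by
  classical
  simp only [injective_map_induceHomOfLE_iff, not_forall] at hni
  obtain ⟨a, b, ⟨w⟩, hab⟩ := hni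
  refine ConnectedComponent.ind fun v => ?_
  by_cases hv : v.1 ∈ s
  · exact ⟨(G.induce s).connectedComponentMk ⟨v, hv⟩, rfl⟩
  · -- `v` is the vertex `i`, through which every walk from `a` to `b` has to pass
    have hvi : v.1 = i := (hi v.2).resolve_right hv
    have hmem : v ∈ w.support := by
      by_contra hvw
      refine hab (G.reachable_of_forall_mem_support h w fun u hu => (hi u.2).resolve_left ?_)
      exact fun hui => hvw (Subtype.ext (hui.trans hvi.symm) ▸ hu)
    exact ⟨(G.induce s).connectedComponentMk a,
      ConnectedComponent.sound ⟨w.takeUntil v hmem⟩⟩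

lemma card_connectedComponent_induce_lt_iff [Finite V] (h : s ⊆ t) {i : V}
    (hi : t ⊆ insert i s) :
    Nat.card (G.induce t).ConnectedComponent < Nat.card (G.induce s).ConnectedComponent ↔
      ¬ Injective (ConnectedComponent.map (G.induceHomOfLE h).toHom) := by
  have := Fintype.ofFinite (G.induce s).ConnectedComponent
  have := Fintype.ofFinite (G.induce t).ConnectedComponent
  refine ⟨fun hlt hinj => (Nat.card_le_card_of_injective _ hinj).not_gt hlt, fun hni => ?_⟩
  simp only [Nat.card_eq_fintype_card]
  exact Fintype.card_lt_of_surjective_not_injective _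
    (G.surjective_map_induceHomOfLE h hi hni) hni

end SimpleGraph

section BinomialEdgeIdeal

variable {K : Type*} [Field K] {n : ℕ} {G : SimpleGraph (Fin n)}

lemma edgeBinomial_self (a : Fin n) : edgeBinomial K a a = 0 :=
  sub_self _

lemma edgeBinomial_swap (a b : Fin n) : edgeBinomial K b a = -edgeBinomial K a b := by
  simp only [edgeBinomial]
  ring

lemma X_inl_mul_edgeBinomial (a b c : Fin n) :
    X (.inl b) * edgeBinomial K a c =
      X (.inl a) * edgeBinomial K b c + X (.inl c) * edgeBinomial K a b := by
  simp only [edgeBinomial]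
  ring

lemma X_inr_mul_edgeBinomial (a b c : Fin n) :
    X (.inr b) * edgeBinomial K a c =
      X (.inr a) * edgeBinomial K b c + X (.inr c) * edgeBinomial K a b := by
  simp only [edgeBinomial]
  ring

lemma Ideal.IsPrime.edgeBinomial_mem_trans {Q : Ideal (MvPolynomial (Fin n ⊕ Fin n) K)}
    (hQ : Q.IsPrime) {a b c : Fin n} (hab : edgeBinomial K a b ∈ Q)
    (hbc : edgeBinomial K b c ∈ Q) (hb : X (.inl b) ∉ Q ∨ X (.inr b) ∉ Q) :
    edgeBinomial K a c ∈ Q := by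
  rcases hb with hb | hb
  · refine (hQ.mem_or_mem ?_).resolve_left hb
    rw [X_inl_mul_edgeBinomial]
    exact Q.add_mem (Q.mul_mem_left _ hbc) (Q.mul_mem_left _ hab)
  · refine (hQ.mem_or_mem ?_).resolve_left hb
    rw [X_inr_mul_edgeBinomial]
    exact Q.add_mem (Q.mul_mem_left _ hbc) (Q.mul_mem_left _ hab)

lemma edgeBinomial_mem_binomialEdgeIdeal {a b : Fin n} (h : G.Adj a b) :
    edgeBinomial K a b ∈ binomialEdgeIdeal K G := by
  rcases lt_or_gt_of_ne h.ne with hab | hba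
  · exact Ideal.subset_span ⟨a, b, h, hab, rfl⟩
  · rw [← neg_neg (edgeBinomial K a b), ← edgeBinomial_swap]
    exact neg_mem (Ideal.subset_span ⟨b, a, h.symm, hba, rfl⟩)

def verticesWithVarsIn (Q : Ideal (MvPolynomial (Fin n ⊕ Fin n) K)) : Set (Fin n) :=
  {i | X (.inl i) ∈ Q ∧ X (.inr i) ∈ Q}

lemma edgeBinomial_mem_of_reachable {Q : Ideal (MvPolynomial (Fin n ⊕ Fin n) K)}
    (hQ : Q.IsPrime) (hJ : binomialEdgeIdeal K G ≤ Q) {a b : ↥(verticesWithVarsIn Q)ᶜ}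
    (hab : (G.induce (verticesWithVarsIn Q)ᶜ).Reachable a b) :
    edgeBinomial K a.1 b.1 ∈ Q := by
  obtain ⟨w⟩ := hab
  induction w with
  | nil => simp [edgeBinomial_self]
  | @cons u v w hadj _ ih =>
    exact hQ.edgeBinomial_mem_trans (hJ (edgeBinomial_mem_binomialEdgeIdeal hadj)) ih
      (not_and_or.mp v.2)

lemma componentPrime_verticesWithVarsIn_le {Q : Ideal (MvPolynomial (Fin n ⊕ Fin n) K)}
    (hQ : Q.IsPrime) (hJ : binomialEdgeIdeal K G ≤ Q) :
    componentPrime K G (verticesWithVarsIn Q) ≤ Q := by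
  rw [componentPrime, Ideal.span_le]
  rintro p (⟨i, hi, rfl | rfl⟩ | ⟨a, b, hab, rfl⟩)
  · exact hi.1
  · exact hi.2
  · exact edgeBinomial_mem_of_reachable hQ hJ hab

variable {U : Set (Fin n)}

lemma X_inl_mem_componentPrime {i : Fin n} (hi : i ∈ U) :
    X (.inl i) ∈ componentPrime K G U :=
  Ideal.subset_span (.inl ⟨i, hi, .inl rfl⟩)

lemma X_inr_mem_componentPrime {i : Fin n} (hi : i ∈ U) :
    X (.inr i) ∈ componentPrime K G U :=
  Ideal.subset_span (.inl ⟨i, hi, .inr rfl⟩)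

lemma edgeBinomial_mem_componentPrime {a b : ↥Uᶜ} (hab : (G.induce Uᶜ).Reachable a b) :
    edgeBinomial K a.1 b.1 ∈ componentPrime K G U :=
  Ideal.subset_span (.inr ⟨a, b, hab, rfl⟩)

lemma edgeBinomial_mem_componentPrime_of_left_mem {a : Fin n} (ha : a ∈ U) (b : Fin n) :
    edgeBinomial K a b ∈ componentPrime K G U :=
  sub_mem (Ideal.mul_mem_right _ _ (X_inl_mem_componentPrime ha))
    (Ideal.mul_mem_left _ _ (X_inr_mem_componentPrime ha))

lemma edgeBinomial_mem_componentPrime_of_right_mem (a : Fin n) {b : Fin n} (hb : b ∈ U) :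
    edgeBinomial K a b ∈ componentPrime K G U := by
  rw [← neg_neg (edgeBinomial K a b), ← edgeBinomial_swap]
  exact neg_mem (edgeBinomial_mem_componentPrime_of_left_mem hb a)

variable (K G U) in
lemma binomialEdgeIdeal_le_componentPrime : binomialEdgeIdeal K G ≤ componentPrime K G U := by
  rw [binomialEdgeIdeal, Ideal.span_le]
  rintro p ⟨a, b, hab, -, rfl⟩
  by_cases ha : a ∈ U
  · exact edgeBinomial_mem_componentPrime_of_left_mem ha b
  by_cases hb : b ∈ U
  · exact edgeBinomial_mem_componentPrime_of_right_mem a hb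
  exact edgeBinomial_mem_componentPrime (a := ⟨a, ha⟩) (b := ⟨b, hb⟩)
    (SimpleGraph.induce_adj.2 hab).reachable

end BinomialEdgeIdeal

section Parametrization

variable {K : Type*} [Field K] {n : ℕ} (G : SimpleGraph (Fin n)) (U : Set (Fin n))

/-- Variables `s_C`, `u_C` for the components `C` of `G[Uᶜ]`, and `t_i` for the vertices. -/
abbrev ParamVar :=
  ((G.induce Uᶜ).ConnectedComponent ⊕ (G.induce Uᶜ).ConnectedComponent) ⊕ Fin n

open Classical in
noncomputable def paramVarExp : Fin n ⊕ Fin n → (ParamVar G U →₀ ℕ)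
  | .inl i => if h : i ∈ U then 0 else
      .single (.inl (.inl ((G.induce Uᶜ).connectedComponentMk ⟨i, h⟩))) 1 + .single (.inr i) 1
  | .inr i => if h : i ∈ U then 0 else
      .single (.inl (.inr ((G.induce Uᶜ).connectedComponentMk ⟨i, h⟩))) 1 + .single (.inr i) 1

variable (K) in
open Classical in
/-- `x_i ↦ s_C t_i` and `y_i ↦ u_C t_i` for `i` in the component `C` of `G[Uᶜ]`, and
`x_i, y_i ↦ 0` for `i ∈ U`. -/
noncomputable def componentParam :
    MvPolynomial (Fin n ⊕ Fin n) K →ₐ[K] MvPolynomial (ParamVar G U) K :=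
  aeval fun v => if Sum.elim id id v ∈ U then 0 else monomial (paramVarExp G U v) 1

variable {G U}

lemma componentParam_X_inl {i : Fin n} (hi : i ∉ U) :
    componentParam K G U (X (.inl i)) =
      X (.inl (.inl ((G.induce Uᶜ).connectedComponentMk ⟨i, hi⟩))) * X (.inr i) := by
  rw [componentParam, aeval_X]
  simp [paramVarExp, hi, X, monomial_mul]

lemma componentParam_X_inr {i : Fin n} (hi : i ∉ U) :
    componentParam K G U (X (.inr i)) =
      X (.inl (.inr ((G.induce Uᶜ).connectedComponentMk ⟨i, hi⟩))) * X (.inr i) := by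
  rw [componentParam, aeval_X]
  simp [paramVarExp, hi, X, monomial_mul]

lemma componentPrime_le_ker_componentParam :
    componentPrime K G U ≤ RingHom.ker (componentParam K G U) := by
  rw [componentPrime, Ideal.span_le]
  rintro p (⟨i, hi, rfl | rfl⟩ | ⟨a, b, hab, rfl⟩) <;>
    simp only [SetLike.mem_coe, RingHom.mem_ker]
  · simp [componentParam, hi]
  · simp [componentParam, hi]
  · simp only [edgeBinomial, map_sub, map_mul, componentParam_X_inl a.2, componentParam_X_inr a.2,
      componentParam_X_inl b.2, componentParam_X_inr b.2, ConnectedComponent.sound hab]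
    ring

lemma X_inl_notMem_componentPrime {i : Fin n} (hi : i ∉ U) :
    X (.inl i) ∉ componentPrime K G U := fun h => by
  simpa [componentParam_X_inl hi, X_ne_zero] using componentPrime_le_ker_componentParam h

lemma edgeBinomial_notMem_componentPrime {a b : ↥Uᶜ}
    (hab : ¬ (G.induce Uᶜ).Reachable a b) :
    edgeBinomial K a.1 b.1 ∉ componentPrime K G U := by
  classical
  intro h
  -- evaluate at `s_C = [C = C_a]` and all other variables `1`
  have h0 := congr(eval (Sum.elim (Sum.elim
    (fun C => if C = (G.induce Uᶜ).connectedComponentMk a then 1 else 0) 1) 1)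
    $(componentPrime_le_ker_componentParam h))
  have hba : ¬ (G.induce Uᶜ).Reachable b a := fun h => hab h.symm
  simp [edgeBinomial, componentParam_X_inl a.2, componentParam_X_inr a.2,
    componentParam_X_inl b.2, componentParam_X_inr b.2, ConnectedComponent.eq, hba] at h0

end Parametrization

lemma Finsupp.exists_eq_add_single_of_ne_zero {σ : Type*} {d : σ →₀ ℕ} {v : σ}
    (hv : d v ≠ 0) :
    ∃ e, d = e + Finsupp.single v 1 :=
  ⟨d - .single v 1,
    (tsub_add_cancel_of_le (Finsupp.single_le_iff.2 (Nat.one_le_iff_ne_zero.2 hv))).symm⟩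

section StandardMonomials

variable {K : Type*} [Field K] {n : ℕ} (G : SimpleGraph (Fin n)) (U : Set (Fin n))

/-- The exponents of the standard monomials modulo `P_U`. -/
structure IsStandardExponent (d : (Fin n ⊕ Fin n) →₀ ℕ) : Prop where
  eq_zero_of_mem : ∀ v, Sum.elim id id v ∈ U → d v = 0
  inl_eq_zero_or_inr_eq_zero : ∀ a b : ↥Uᶜ, (G.induce Uᶜ).Reachable a b → a.1 < b.1 →
    d (.inl a.1) = 0 ∨ d (.inr b.1) = 0

variable {G U}

lemma monomial_mem_componentPrime {d : (Fin n ⊕ Fin n) →₀ ℕ} {v : Fin n ⊕ Fin n}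
    (hv : Sum.elim id id v ∈ U) (hd : d v ≠ 0) (c : K) :
    monomial d c ∈ componentPrime K G U := by
  obtain ⟨e, rfl⟩ := Finsupp.exists_eq_add_single_of_ne_zero hd
  rw [← mul_one c, ← monomial_mul, ← X]
  refine Ideal.mul_mem_left _ _ ?_
  rcases v with i | i
  exacts [X_inl_mem_componentPrime hv, X_inr_mem_componentPrime hv]

lemma monomial_sub_monomial_mem_componentPrime {a b : ↥Uᶜ} (hab : (G.induce Uᶜ).Reachable a b)
    (e : (Fin n ⊕ Fin n) →₀ ℕ) (c : K) :
    monomial (e + .single (.inl a.1) 1 + .single (.inr b.1) 1) c -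
      monomial (e + .single (.inl b.1) 1 + .single (.inr a.1) 1) c ∈ componentPrime K G U := by
  have : monomial (e + .single (.inl a.1) 1 + .single (.inr b.1) 1) c -
      monomial (e + .single (.inl b.1) 1 + .single (.inr a.1) 1) c =
        monomial e c * edgeBinomial K a.1 b.1 := by
    simp only [edgeBinomial, X, mul_sub, monomial_mul, mul_one, add_assoc]
  rw [this]
  exact Ideal.mul_mem_left _ _ (edgeBinomial_mem_componentPrime hab)

lemma exists_isStandardExponent_sub_monomial_mem (d : (Fin n ⊕ Fin n) →₀ ℕ) (c : K) :
    ∃ g, (∀ e ∈ g.support, IsStandardExponent G U e) ∧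
      monomial d c - g ∈ componentPrime K G U := by
  -- each swap `x_a y_b ↦ x_b y_a` with `a < b` lowers this weight
  induction hw : Finsupp.weight (Sum.elim 0 fun i : Fin n => (i : ℕ)) d
    using Nat.strong_induction_on generalizing d with
  | _ w ih =>
  by_cases hU : ∃ v, Sum.elim id id v ∈ U ∧ d v ≠ 0
  · obtain ⟨v, hv, hd⟩ := hU
    exact ⟨0, by simp, by simpa using monomial_mem_componentPrime hv hd c⟩
  by_cases hswap : ∃ a b : ↥Uᶜ, (G.induce Uᶜ).Reachable a b ∧ a.1 < b.1 ∧
      d (.inl a.1) ≠ 0 ∧ d (.inr b.1) ≠ 0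
  · obtain ⟨a, b, hab, hlt, ha, hb⟩ := hswap
    obtain ⟨d₁, rfl⟩ := Finsupp.exists_eq_add_single_of_ne_zero ha
    obtain ⟨e, rfl⟩ :=
      Finsupp.exists_eq_add_single_of_ne_zero (v := Sum.inr b.1) (by simpa using hb)
    rw [add_right_comm] at hw ⊢
    obtain ⟨g, hg, hmem⟩ := ih _ (by simpa [← hw, Finsupp.weight_single] using hlt)
      (e + .single (.inl b.1) 1 + .single (.inr a.1) 1) rfl
    exact ⟨g, hg, by
      simpa using add_mem (monomial_sub_monomial_mem_componentPrime hab e c) hmem⟩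
  push Not at hU hswap
  refine ⟨monomial d c, fun e he => ?_, by simp⟩
  obtain rfl : e = d := Finset.mem_singleton.1 (support_monomial_subset he)
  exact ⟨hU, fun a b hab hlt => or_iff_not_imp_left.2 (hswap a b hab hlt)⟩

lemma exists_isStandardExponent_sub_mem (f : MvPolynomial (Fin n ⊕ Fin n) K) :
    ∃ g, (∀ e ∈ g.support, IsStandardExponent G U e) ∧ f - g ∈ componentPrime K G U := by
  classical
  induction f using MvPolynomial.induction_on' with
  | monomial d c => exact exists_isStandardExponent_sub_monomial_mem d c
  | add p q hp hq =>
    obtain ⟨g, hg, hpg⟩ := hp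
    obtain ⟨g', hg', hqg'⟩ := hq
    refine ⟨g + g', fun e he => ?_, by simpa [add_sub_add_comm] using add_mem hpg hqg'⟩
    rcases Finset.mem_union.1 (support_add he) with he | he
    exacts [hg e he, hg' e he]

end StandardMonomials

section Kernel

variable {K : Type*} [Field K] {n : ℕ} {G : SimpleGraph (Fin n)} {U : Set (Fin n)}

open Classical in
lemma weight_paramVarExp_inr (d : (Fin n ⊕ Fin n) →₀ ℕ) (i : Fin n) :
    Finsupp.weight (paramVarExp G U) d (.inr i) =
      if i ∈ U then 0 else d (.inl i) + d (.inr i) := by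
  induction d using Finsupp.induction_linear with
  | zero => simp
  | add d d' hd hd' =>
    simp only [map_add, Finsupp.add_apply, hd, hd']
    split_ifs <;> omega
  | single v k =>
    rcases v with j | j <;> by_cases hj : j ∈ U <;> by_cases hji : j = i <;>
      simp [Finsupp.weight_single, paramVarExp, hj, hji] <;> simp_all

open Classical in
lemma weight_paramVarExp_inl_inr (d : (Fin n ⊕ Fin n) →₀ ℕ)
    (C : (G.induce Uᶜ).ConnectedComponent) :
    Finsupp.weight (paramVarExp G U) d (.inl (.inr C)) =
      ∑ j with (G.induce Uᶜ).connectedComponentMk j = C, d (.inr j.1) := by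
  induction d using Finsupp.induction_linear with
  | zero => simp
  | add d d' hd hd' => simp only [map_add, Finsupp.add_apply, hd, hd', Finset.sum_add_distrib]
  | single v k =>
    rcases v with j | j
    · by_cases hj : j ∈ U <;> simp [Finsupp.weight_single, paramVarExp, hj]
    by_cases hj : j ∈ U
    · simp only [Finsupp.weight_single, paramVarExp, hj, dite_true, smul_zero,
        Finsupp.coe_zero, Pi.zero_apply, Finsupp.single_apply, Sum.inr.injEq]
      exact (Finset.sum_eq_zero fun x _ => if_neg fun h => x.2 (h ▸ hj)).symm
    · simp [Finsupp.weight_single, paramVarExp, hj, Finsupp.single_apply]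
      rw [Finset.sum_filter, Fintype.sum_eq_single ⟨j, hj⟩ fun x hx => by
        simp [Subtype.ext_iff] at hx; simp [Ne.symm hx], if_pos rfl]

open Classical in
lemma inr_le_of_weight_paramVarExp_eq {d d' : (Fin n ⊕ Fin n) →₀ ℕ}
    (hd : IsStandardExponent G U d) (hd' : IsStandardExponent G U d')
    (h : Finsupp.weight (paramVarExp G U) d = Finsupp.weight (paramVarExp G U) d') (a : Fin n)
    (hbelow : ∀ j < a, d (.inr j) = d' (.inr j)) : d' (.inr a) ≤ d (.inr a) := by
  by_contra! hlt
  have ha : a ∉ U := fun ha => by simp [hd'.eq_zero_of_mem (.inr a) ha] at hlt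
  have hdeg := congr($h (.inr a))
  simp only [weight_paramVarExp_inr, if_neg ha] at hdeg
  have hxa : d (.inl a) ≠ 0 := by omega
  set C := (G.induce Uᶜ).connectedComponentMk ⟨a, ha⟩
  have hsum := congr($h (.inl (.inr C)))
  simp only [weight_paramVarExp_inl_inr] at hsum
  set F := Finset.univ.filter fun j => (G.induce Uᶜ).connectedComponentMk j = C
  -- below `a` the two exponents agree, so the vertices of `C` above `a` make up the difference
  have hge : ∑ j ∈ F.filter (a ≤ ·.1), d (.inr j.1) =
      ∑ j ∈ F.filter (a ≤ ·.1), d' (.inr j.1) := by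
    have hlow : ∑ j ∈ F.filter (¬ a ≤ ·.1), d (.inr j.1) =
        ∑ j ∈ F.filter (¬ a ≤ ·.1), d' (.inr j.1) :=
      Finset.sum_congr rfl fun j hj => hbelow j (not_le.1 (Finset.mem_filter.1 hj).2)
    rw [← Finset.sum_filter_add_sum_filter_not F (a ≤ ·.1),
      ← Finset.sum_filter_add_sum_filter_not F (a ≤ ·.1) (fun j => d' (.inr j.1)), hlow]
      at hsum
    omega
  have haF : ⟨a, ha⟩ ∈ F.filter (a ≤ ·.1) := by simp [F, C]
  rw [← Finset.add_sum_erase _ _ haF, ← Finset.add_sum_erase _ _ haF] at hge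
  dsimp only at hge
  obtain ⟨b, hb, hbd⟩ := Finset.exists_lt_of_sum_lt (show
    ∑ j ∈ (F.filter (a ≤ ·.1)).erase ⟨a, ha⟩, d' (.inr j.1) <
      ∑ j ∈ (F.filter (a ≤ ·.1)).erase ⟨a, ha⟩, d (.inr j.1) by omega)
  simp only [Finset.mem_erase, Finset.mem_filter, Finset.mem_univ, true_and, F] at hb
  obtain ⟨hba, hbC, hab⟩ := hb
  have hab' : a < b.1 := lt_of_le_of_ne hab fun h => hba (Subtype.ext h.symm)
  rcases hd.inl_eq_zero_or_inr_eq_zero ⟨a, ha⟩ b (ConnectedComponent.exact hbC.symm) hab' with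
    h0 | h0
  · exact hxa h0
  · omega

lemma injOn_weight_paramVarExp :
    Set.InjOn (Finsupp.weight (paramVarExp G U)) {d | IsStandardExponent G U d} := by
  intro d hd d' hd' h
  have hy : ∀ a, d (.inr a) = d' (.inr a) := by
    intro a
    induction a using WellFoundedLT.induction with
    | _ a ih =>
      exact le_antisymm (inr_le_of_weight_paramVarExp_eq hd' hd h.symm a fun j hj => (ih j hj).symm)
        (inr_le_of_weight_paramVarExp_eq hd hd' h a ih)
  ext (i | i)
  · by_cases hi : i ∈ U
    · rw [hd.eq_zero_of_mem (.inl i) hi, hd'.eq_zero_of_mem (.inl i) hi]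
    · have hdeg := congr($h (.inr i))
      simp only [weight_paramVarExp_inr, if_neg hi, hy i] at hdeg
      omega
  · exact hy i

lemma componentParam_monomial {d : (Fin n ⊕ Fin n) →₀ ℕ} (hd : IsStandardExponent G U d)
    (c : K) :
    componentParam K G U (monomial d c) = monomial (Finsupp.weight (paramVarExp G U) d) c := by
  rw [componentParam, aeval_monomial,
    Finsupp.prod_congr (g2 := fun v k => monomial (k • paramVarExp G U v) (1 : K)) fun v hv => by
      rw [if_neg fun h => Finsupp.mem_support_iff.1 hv (hd.eq_zero_of_mem v h), monomial_pow,
        one_pow],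
    Finsupp.prod, ← monomial_sum_one, algebraMap_eq, C_mul_monomial, mul_one,
    Finsupp.weight_apply, Finsupp.sum]

lemma coeff_componentParam {g : MvPolynomial (Fin n ⊕ Fin n) K}
    (hg : ∀ e ∈ g.support, IsStandardExponent G U e) {d : (Fin n ⊕ Fin n) →₀ ℕ}
    (hd : IsStandardExponent G U d) :
    coeff (Finsupp.weight (paramVarExp G U) d) (componentParam K G U g) = coeff d g := by
  classical
  conv_lhs => rw [g.as_sum, map_sum]
  rw [Finset.sum_congr rfl fun e he => componentParam_monomial (hg e he) _, coeff_sum]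
  rw [Finset.sum_congr rfl fun e he => show coeff _ (monomial _ _) = if e = d then coeff e g else 0
    by simp only [coeff_monomial, injOn_weight_paramVarExp.eq_iff (hg e he) hd],
    Finset.sum_ite_eq']
  split_ifs with hd
  · rfl
  · exact (notMem_support_iff.1 hd).symm

lemma ker_componentParam : RingHom.ker (componentParam K G U) = componentPrime K G U := by
  refine le_antisymm (fun f hf => ?_) componentPrime_le_ker_componentParam
  obtain ⟨g, hg, hfg⟩ := exists_isStandardExponent_sub_mem (G := G) (U := U) f
  have hg0 : componentParam K G U g = 0 := by
    simpa [RingHom.mem_ker.1 hf] using componentPrime_le_ker_componentParam hfg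
  have : g = 0 := by
    ext d
    by_cases hd : d ∈ g.support
    · rw [← coeff_componentParam hg (hg d hd), hg0, coeff_zero, coeff_zero]
    · simpa using hd
  simpa [this] using hfg

variable (K G U) in
lemma componentPrime_isPrime : (componentPrime K G U).IsPrime :=
  ker_componentParam (K := K) ▸ RingHom.ker_isPrime _

end Kernel

section Comparison

variable {K : Type*} [Field K] {n : ℕ} {G : SimpleGraph (Fin n)} {U S : Set (Fin n)}

lemma subset_of_componentPrime_le (h : componentPrime K G U ≤ componentPrime K G S) :
    U ⊆ S := by
  intro i hi
  by_contra hiS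
  exact X_inl_notMem_componentPrime hiS (h (X_inl_mem_componentPrime hi))

lemma reachable_of_componentPrime_le (h : componentPrime K G U ≤ componentPrime K G S)
    (hUS : Sᶜ ⊆ Uᶜ) {a b : ↥Sᶜ}
    (hab : (G.induce Uᶜ).Reachable (Set.inclusion hUS a) (Set.inclusion hUS b)) :
    (G.induce Sᶜ).Reachable a b := by
  by_contra hab'
  have hmem : edgeBinomial K (Set.inclusion hUS a).1 (Set.inclusion hUS b).1 ∈
      componentPrime K G U := edgeBinomial_mem_componentPrime hab
  exact edgeBinomial_notMem_componentPrime hab' (h hmem)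

lemma componentPrime_le_componentPrime (hUS : U ⊆ S)
    (h : ∀ a b : ↥Sᶜ,
      (G.induce Uᶜ).Reachable (Set.inclusion (Set.compl_subset_compl.2 hUS) a)
        (Set.inclusion (Set.compl_subset_compl.2 hUS) b) → (G.induce Sᶜ).Reachable a b) :
    componentPrime K G U ≤ componentPrime K G S := by
  rw [componentPrime, Ideal.span_le]
  rintro p (⟨i, hi, rfl | rfl⟩ | ⟨a, b, hab, rfl⟩)
  · exact X_inl_mem_componentPrime (hUS hi)
  · exact X_inr_mem_componentPrime (hUS hi)
  by_cases ha : a.1 ∈ S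
  · exact edgeBinomial_mem_componentPrime_of_left_mem ha b
  by_cases hb : b.1 ∈ S
  · exact edgeBinomial_mem_componentPrime_of_right_mem a.1 hb
  exact edgeBinomial_mem_componentPrime (K := K) (a := ⟨a.1, ha⟩) (b := ⟨b.1, hb⟩)
    (h _ _ hab)

variable (G) in
lemma numComponents_sdiff_singleton_lt_iff (S : Set (Fin n)) (i : Fin n) :
    numComponents G (S \ {i}) < numComponents G S ↔
      ¬ ∀ a b : ↥Sᶜ, (G.induce (S \ {i})ᶜ).Reachable
          (Set.inclusion (Set.compl_subset_compl.2 Set.sdiff_subset) a)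
          (Set.inclusion (Set.compl_subset_compl.2 Set.sdiff_subset) b) →
        (G.induce Sᶜ).Reachable a b := by
  rw [numComponents, numComponents, G.card_connectedComponent_induce_lt_iff _ (i := i) fun j => by
    simp only [Set.mem_compl_iff, Set.mem_sdiff, Set.mem_singleton_iff, Set.mem_insert_iff]
    tauto, injective_map_induceHomOfLE_iff]

lemma componentPrime_sdiff_singleton_le {i : Fin n}
    (h : ¬ numComponents G (S \ {i}) < numComponents G S) :
    componentPrime K G (S \ {i}) ≤ componentPrime K G S := by
  rw [numComponents_sdiff_singleton_lt_iff, not_not] at h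
  exact componentPrime_le_componentPrime Set.sdiff_subset h

lemma componentPrime_le_of_forall_numComponents_lt
    (hcut : ∀ i ∈ S, numComponents G (S \ {i}) < numComponents G S)
    {Q : Ideal (MvPolynomial (Fin n ⊕ Fin n) K)} (hQ : Q.IsPrime)
    (hJ : binomialEdgeIdeal K G ≤ Q)
    (hQS : Q ≤ componentPrime K G S) : componentPrime K G S ≤ Q := by
  have hTQ := componentPrime_verticesWithVarsIn_le hQ hJ
  have hTS := subset_of_componentPrime_le (hTQ.trans hQS)
  obtain rfl : verticesWithVarsIn Q = S := by
    refine hTS.antisymm fun i hiS => not_not.1 fun hiT => ?_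
    have hTi : (S \ {i})ᶜ ⊆ (verticesWithVarsIn Q)ᶜ :=
      Set.compl_subset_compl.2 fun j hj => ⟨hTS hj, fun hji => hiT (hji ▸ hj)⟩
    refine (numComponents_sdiff_singleton_lt_iff G S i).1 (hcut i hiS) fun a b hab => ?_
    exact reachable_of_componentPrime_le (hTQ.trans hQS) (Set.compl_subset_compl.2 hTS)
      (hab.map (G.induceHomOfLE hTi).toHom)
  exact hTQ

end Comparison

theorem componentPrime_mem_minimalPrimes_iff_general (K : Type*) [Field K] {n : ℕ}
    (G : SimpleGraph (Fin n)) (S : Set (Fin n)) :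
    componentPrime K G S ∈ (binomialEdgeIdeal K G).minimalPrimes ↔
      S = ∅ ∨ (S ≠ ∅ ∧ ∀ i ∈ S, numComponents G (S \ {i}) < numComponents G S) := by
  have hrhs :
      (S = ∅ ∨ (S ≠ ∅ ∧ ∀ i ∈ S, numComponents G (S \ {i}) < numComponents G S)) ↔
        ∀ i ∈ S, numComponents G (S \ {i}) < numComponents G S := by
    rcases S.eq_empty_or_nonempty with rfl | hS
    · simp
    · simp [hS.ne_empty]
  have hprime (U : Set (Fin n)) : (componentPrime K G U).IsPrime ∧
      binomialEdgeIdeal K G ≤ componentPrime K G U :=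
    ⟨componentPrime_isPrime K G U, binomialEdgeIdeal_le_componentPrime K G U⟩
  rw [hrhs]
  refine ⟨fun hmin i hi => ?_, fun hcut => ⟨hprime S, fun Q ⟨hQ, hJ⟩ hQS =>
    componentPrime_le_of_forall_numComponents_lt hcut hQ hJ hQS⟩⟩
  by_contra hnot
  have hle := hmin.2 (hprime _) (componentPrime_sdiff_singleton_le hnot)
  simpa using subset_of_componentPrime_le hle hi

/-- For `G` connected, `P_S(G)` is a minimal prime of `J_G` if and only if `S = ∅`, or
`S ≠ ∅` and `c(S ∖ {i}) < c(S)` for each `i ∈ S` (i.e. each `i ∈ S` is a cut vertex of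
the induced subgraph on `([n] ∖ S) ∪ {i}`). -/
theorem componentPrime_mem_minimalPrimes_iff (K : Type*) [Field K] {n : ℕ}
    (G : SimpleGraph (Fin n)) (hconn : G.Connected) (S : Set (Fin n)) :
    componentPrime K G S ∈ (binomialEdgeIdeal K G).minimalPrimes ↔
      S = ∅ ∨ (S ≠ ∅ ∧ ∀ i ∈ S, numComponents G (S \ {i}) < numComponents G S) :=
  componentPrime_mem_minimalPrimes_iff_general K G S
end
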